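/- A list (b_1,…,b_r) of integers with every b_i ≥ 2 is a T-chain if and only if it can be obtained from one of the lists (4) or (3,2,…,2,3) (with k ≥ 0 intermediate entries equal to 2) by finitely many applications of the two operations (b_1,…,b_r) ↦ (b_1+1, b_2,…,b_r, 2) and (b_1,…,b_r) ↦ (2, b_1,…,b_{r−1}, b_r+1). Moreover, if the T-chain has Hirzebruch–Jung continued fraction dn²/(dna−1) with d ≥ 1 and 0 < a < n coprime, then the starting list can be taken to be (4) if d = 1 and (3,2,…,2,3) with exactly d−2 twos if d ≥ 2. -/

import Mathlib

/-- Hirzebruch–Jung continued fraction: `hjcf [b₁,…,b_r] = b₁ - 1/(b₂ - 1/(⋯ - 1/b_r))`.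
(With the convention `hjcf [] = 0`, so that `hjcf [b] = b` since `1/0 = 0`.) -/
def hjcf : List ℚ → ℚ
  | [] => 0
  | b :: l => b - 1 / hjcf l

/-- Hirzebruch–Jung continued fraction of a list of integers. -/
def hjcfZ (b : List ℤ) : ℚ := hjcf (b.map (fun x => (x : ℚ)))

/-- `b` is a T-chain: all entries are at least `2` and its Hirzebruch–Jung continued fraction
is `dn²/(dna−1)` for some `d ≥ 1` and coprime `0 < a < n`. -/
def IsTChain (b : List ℤ) : Prop :=
  (∀ x ∈ b, 2 ≤ x) ∧
    ∃ d n a : ℤ, 1 ≤ d ∧ 0 < a ∧ a < n ∧ Int.gcd a n = 1 ∧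
      hjcfZ b = ((d * n ^ 2 : ℤ) : ℚ) / ((d * n * a - 1 : ℤ) : ℚ)

/-- The operation `(b₁,…,b_r) ↦ (b₁+1, b₂,…,b_r, 2)`. -/
def addLeft (b : List ℤ) : List ℤ := b.modifyHead (· + 1) ++ [2]

/-- The operation `(b₁,…,b_r) ↦ (2, b₁,…,b_{r-1}, b_r+1)`. -/
def addRight (b : List ℤ) : List ℤ := 2 :: (b.reverse.modifyHead (· + 1)).reverse

/-- One application of either of the two T-chain extension operations. -/
def tStep (x y : List ℤ) : Prop := y = addLeft x ∨ y = addRight x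


/-!
With `M(b) = !![b, -1; 1, 0]`, the product `M(b₁) ⋯ M(b_r)` has first column `(p, q)` with
`[b₁, …, b_r] = p / q`, and a list with entries `≥ 2` is determined by this value: its first entry
is the ceiling. The two operations multiply the product by fixed unipotent matrices on both sides;
on the product `T(d, n, a)` of a T-chain they act as `(n, a) ↦ (n + a, a)` and
`(n, a) ↦ (2n - a, n)`, keeping `d` and coprimality. Conversely, the inverse steps
`(n, a) ↦ (n - a, a)` (when `2a < n`) and `(n, a) ↦ (a, 2a - n)` (when `2a > n`) decrease `n` until
`2a = n`, that is `(n, a) = (2, 1)`, realised by `(4)` if `d = 1` and by `(3, 2, …, 2, 3)` with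
`d - 2` twos otherwise.
-/

def hjMat (b : ℤ) : Matrix (Fin 2) (Fin 2) ℤ := !![b, -1; 1, 0]

def chainMat (l : List ℤ) : Matrix (Fin 2) (Fin 2) ℤ := (l.map hjMat).prod

-- The second column comes from the reversed chain, whose value is `dn² / (dn(n - a) - 1)`.
def tMat (d n a : ℤ) : Matrix (Fin 2) (Fin 2) ℤ :=
  !![d * n ^ 2, 1 - d * n * (n - a); d * n * a - 1, 1 - d * a * (n - a)]

def tStart (d : ℤ) : List ℤ :=
  if d = 1 then [4] else 3 :: (List.replicate (d - 2).toNat 2 ++ [3])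

lemma hjcfZ_nil : hjcfZ [] = 0 := rfl

lemma hjcfZ_cons (b : ℤ) (l : List ℤ) : hjcfZ (b :: l) = b - 1 / hjcfZ l := rfl

lemma addLeft_cons (b : ℤ) (l : List ℤ) : addLeft (b :: l) = (b + 1) :: (l ++ [2]) := rfl

lemma addRight_append_singleton (l : List ℤ) (c : ℤ) :
    addRight (l ++ [c]) = 2 :: (l ++ [c + 1]) := by
  simp [addRight]

@[simp] lemma chainMat_nil : chainMat [] = 1 := rfl

@[simp] lemma chainMat_cons (b : ℤ) (l : List ℤ) :
    chainMat (b :: l) = hjMat b * chainMat l := by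
  simp [chainMat]

lemma chainMat_append (l₁ l₂ : List ℤ) : chainMat (l₁ ++ l₂) = chainMat l₁ * chainMat l₂ := by
  simp [chainMat]

lemma chainMat_cons_zero_zero (b : ℤ) (l : List ℤ) :
    chainMat (b :: l) 0 0 = b * chainMat l 0 0 - chainMat l 1 0 := by
  simp [hjMat, Matrix.mul_apply, Fin.sum_univ_two, sub_eq_add_neg]

lemma chainMat_cons_one_zero (b : ℤ) (l : List ℤ) : chainMat (b :: l) 1 0 = chainMat l 0 0 := by
  simp [hjMat, Matrix.mul_apply, Fin.sum_univ_two]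

lemma chainMat_one_zero_lt {l : List ℤ} (hl : ∀ x ∈ l, 2 ≤ x) :
    0 ≤ chainMat l 1 0 ∧ chainMat l 1 0 < chainMat l 0 0 := by
  induction l with
  | nil => simp
  | cons b l ih =>
    obtain ⟨hq, hqp⟩ := ih fun x hx => hl x (List.mem_cons_of_mem b hx)
    have hb : 2 ≤ b := hl b List.mem_cons_self
    rw [chainMat_cons_zero_zero, chainMat_cons_one_zero]
    constructor <;> nlinarith

lemma hjcfZ_eq_div {l : List ℤ} (hl : ∀ x ∈ l, 2 ≤ x) :
    hjcfZ l = (chainMat l 0 0 : ℚ) / chainMat l 1 0 := by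
  induction l with
  | nil => simp [hjcfZ_nil] -- both sides are `0`, since `1 / 0 = 0`
  | cons b l ih =>
    have hl' : ∀ x ∈ l, 2 ≤ x := fun x hx => hl x (List.mem_cons_of_mem b hx)
    obtain ⟨hq, hqp⟩ := chainMat_one_zero_lt hl'
    have hp : (chainMat l 0 0 : ℚ) ≠ 0 := by exact_mod_cast (hq.trans_lt hqp).ne'
    rw [hjcfZ_cons, ih hl', chainMat_cons_zero_zero, chainMat_cons_one_zero, one_div_div]
    push_cast
    field_simp

lemma ceil_hjcfZ_cons (b : ℤ) {l : List ℤ} (hl : ∀ x ∈ l, 2 ≤ x) : ⌈hjcfZ (b :: l)⌉ = b := by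
  obtain ⟨hq, hqp⟩ := chainMat_one_zero_lt hl
  have hp : (0 : ℚ) < chainMat l 0 0 := by exact_mod_cast hq.trans_lt hqp
  have hq' : (0 : ℚ) ≤ chainMat l 1 0 := by exact_mod_cast hq
  have hqp' : (chainMat l 1 0 : ℚ) < chainMat l 0 0 := by exact_mod_cast hqp
  rw [hjcfZ_cons, hjcfZ_eq_div hl, one_div_div, Int.ceil_eq_iff]
  constructor
  · linarith [(div_lt_one hp).2 hqp']
  · linarith [div_nonneg hq' hp.le]

lemma eq_of_hjcfZ_eq {l l' : List ℤ} (hl : ∀ x ∈ l, 2 ≤ x) (hl' : ∀ x ∈ l', 2 ≤ x)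
    (h : hjcfZ l = hjcfZ l') : l = l' := by
  induction l generalizing l' with
  | nil =>
    cases l' with
    | nil => rfl
    | cons c t' =>
      have := ceil_hjcfZ_cons c fun x hx => hl' x (List.mem_cons_of_mem c hx)
      rw [← h, hjcfZ_nil, Int.ceil_zero] at this
      linarith [hl' c List.mem_cons_self]
  | cons b t ih =>
    have ht : ∀ x ∈ t, 2 ≤ x := fun x hx => hl x (List.mem_cons_of_mem b hx)
    cases l' with
    | nil =>
      have := ceil_hjcfZ_cons b ht
      rw [h, hjcfZ_nil, Int.ceil_zero] at this
      linarith [hl b List.mem_cons_self]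
    | cons c t' =>
      have ht' : ∀ x ∈ t', 2 ≤ x := fun x hx => hl' x (List.mem_cons_of_mem c hx)
      have hbc : b = c := by rw [← ceil_hjcfZ_cons b ht, h, ceil_hjcfZ_cons c ht']
      subst hbc
      rw [hjcfZ_cons, hjcfZ_cons, sub_right_inj, one_div, one_div, inv_inj] at h
      rw [ih ht ht' h]

lemma hjMat_add_one_left (b : ℤ) : hjMat (b + 1) = !![1, 1; 0, 1] * hjMat b := by
  simp [hjMat]

lemma hjMat_add_one_right (b : ℤ) : hjMat (b + 1) = hjMat b * !![1, 0; -1, 1] := by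
  simp [hjMat]

lemma hjMat_two_pow (k : ℕ) : hjMat 2 ^ k = !![(k : ℤ) + 1, -k; k, 1 - k] := by
  induction k with
  | zero => simp [Matrix.one_fin_two]
  | succ k ih =>
    rw [pow_succ, ih, hjMat, Matrix.mul_fin_two]
    ext i j
    fin_cases i <;> fin_cases j <;> simp <;> ring

lemma chainMat_addLeft {l : List ℤ} (hl : l ≠ []) :
    chainMat (addLeft l) = !![1, 1; 0, 1] * chainMat l * hjMat 2 := by
  obtain ⟨b, t, rfl⟩ := List.exists_cons_of_ne_nil hl
  simp [addLeft_cons, chainMat_append, hjMat_add_one_left, Matrix.mul_assoc]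

lemma chainMat_addRight {l : List ℤ} (hl : l ≠ []) :
    chainMat (addRight l) = hjMat 2 * chainMat l * !![1, 0; -1, 1] := by
  obtain ⟨t, c, rfl⟩ := (List.eq_nil_or_concat' l).resolve_left hl
  simp [addRight_append_singleton, chainMat_append, hjMat_add_one_right, Matrix.mul_assoc]

lemma tMat_addLeft (d n a : ℤ) : !![1, 1; 0, 1] * tMat d n a * hjMat 2 = tMat d (n + a) a := by
  simp only [tMat, hjMat, Matrix.mul_fin_two]
  ext i j
  fin_cases i <;> fin_cases j <;> dsimp <;> ring

lemma tMat_addRight (d n a : ℤ) :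
    hjMat 2 * tMat d n a * !![1, 0; -1, 1] = tMat d (2 * n - a) n := by
  simp only [tMat, hjMat, Matrix.mul_fin_two]
  ext i j
  fin_cases i <;> fin_cases j <;> dsimp <;> ring

lemma chainMat_replicate (k : ℕ) (b : ℤ) : chainMat (List.replicate k b) = hjMat b ^ k := by
  simp [chainMat]

lemma chainMat_tStart {d : ℤ} (hd : 1 ≤ d) : chainMat (tStart d) = tMat d 2 1 := by
  by_cases hd1 : d = 1
  · subst hd1
    simp [tStart, tMat, hjMat]
  · obtain ⟨k, rfl⟩ : ∃ k : ℕ, d = k + 2 := ⟨(d - 2).toNat, by omega⟩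
    rw [tStart, if_neg hd1, show ((k : ℤ) + 2 - 2).toNat = k by omega, chainMat_cons,
      chainMat_append, chainMat_replicate, hjMat_two_pow]
    ext i j
    fin_cases i <;> fin_cases j <;> simp [tMat, hjMat] <;> ring

lemma ne_nil_of_chainMat_eq_tMat {l : List ℤ} {d n a : ℤ} (ha : 0 < a) (han : a < n)
    (h : chainMat l = tMat d n a) : l ≠ [] := by
  rintro rfl
  have h10 := congrFun (congrFun h 1) 0
  simp only [chainMat_nil, tMat, Matrix.of_apply, Matrix.cons_val', Matrix.cons_val_one,
    Matrix.cons_val_zero, Matrix.one_apply_ne one_ne_zero] at h10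
  have hdvd : n * a ∣ 1 := ⟨d, by linarith⟩
  nlinarith [Int.le_of_dvd one_pos hdvd]

lemma chainMat_addLeft_of_eq_tMat {l : List ℤ} {d n a : ℤ} (ha : 0 < a) (han : a < n)
    (h : chainMat l = tMat d n a) : chainMat (addLeft l) = tMat d (n + a) a := by
  rw [chainMat_addLeft (ne_nil_of_chainMat_eq_tMat ha han h), h, tMat_addLeft]

lemma chainMat_addRight_of_eq_tMat {l : List ℤ} {d n a : ℤ} (ha : 0 < a) (han : a < n)
    (h : chainMat l = tMat d n a) : chainMat (addRight l) = tMat d (2 * n - a) n := by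
  rw [chainMat_addRight (ne_nil_of_chainMat_eq_tMat ha han h), h, tMat_addRight]

lemma two_le_of_tStep {x y : List ℤ} (hx : ∀ z ∈ x, 2 ≤ z) (hs : tStep x y) :
    ∀ z ∈ y, 2 ≤ z := by
  rcases hs with rfl | rfl
  · rcases x with _ | ⟨b, t⟩
    · simp [addLeft]
    · have hb := hx b List.mem_cons_self
      simp only [addLeft_cons, List.mem_cons, List.mem_append, List.not_mem_nil, or_false]
      rintro z (rfl | ht | rfl)
      · omega
      · exact hx z (List.mem_cons_of_mem b ht)
      · rfl
  · rcases List.eq_nil_or_concat' x with rfl | ⟨t, c, rfl⟩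
    · simp [addRight]
    · have hc := hx c (by simp)
      simp only [addRight_append_singleton, List.mem_cons, List.mem_append, List.not_mem_nil,
        or_false]
      rintro z (rfl | ht | rfl)
      · rfl
      · exact hx z (List.mem_append_left [c] ht)
      · omega

lemma two_le_of_reflTransGen {x y : List ℤ} (hx : ∀ z ∈ x, 2 ≤ z)
    (h : Relation.ReflTransGen tStep x y) : ∀ z ∈ y, 2 ≤ z := by
  induction h with
  | refl => exact hx
  | tail _ hs ih => exact two_le_of_tStep ih hs

lemma two_le_tStart (d : ℤ) : ∀ z ∈ tStart d, 2 ≤ z := by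
  unfold tStart
  split_ifs
  · simp
  · simp only [List.mem_cons, List.mem_append, List.mem_replicate, List.not_mem_nil, or_false]
    rintro z (rfl | ⟨-, rfl⟩ | rfl) <;> norm_num

def HasTParams (d : ℤ) (l : List ℤ) : Prop :=
  ∃ n a : ℤ, 0 < a ∧ a < n ∧ Int.gcd a n = 1 ∧ chainMat l = tMat d n a

lemma HasTParams.of_tStep {d : ℤ} {x y : List ℤ} (h : HasTParams d x) (hs : tStep x y) :
    HasTParams d y := by
  obtain ⟨n, a, ha, han, hgcd, hm⟩ := h
  rcases hs with rfl | rfl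
  · refine ⟨n + a, a, ha, by omega, by simpa using hgcd, chainMat_addLeft_of_eq_tMat ha han hm⟩
  · refine ⟨2 * n - a, n, by omega, by omega, ?_, chainMat_addRight_of_eq_tMat ha han hm⟩
    rw [show 2 * n - a = -a + n * 2 by ring, Int.gcd_add_mul_left_right, Int.gcd_neg, Int.gcd_comm,
      hgcd]

lemma HasTParams.of_reflTransGen {d : ℤ} {x y : List ℤ} (h : HasTParams d x)
    (hr : Relation.ReflTransGen tStep x y) : HasTParams d y := by
  induction hr with
  | refl => exact h
  | tail _ hs ih => exact ih.of_tStep hs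

lemma hasTParams_tStart {d : ℤ} (hd : 1 ≤ d) : HasTParams d (tStart d) :=
  ⟨2, 1, one_pos, one_lt_two, rfl, chainMat_tStart hd⟩

lemma hjcfZ_eq_of_chainMat_eq_tMat {l : List ℤ} {d n a : ℤ} (hl : ∀ x ∈ l, 2 ≤ x)
    (h : chainMat l = tMat d n a) :
    hjcfZ l = ((d * n ^ 2 : ℤ) : ℚ) / ((d * n * a - 1 : ℤ) : ℚ) := by
  rw [hjcfZ_eq_div hl, h]
  simp [tMat]

lemma HasTParams.isTChain {d : ℤ} {l : List ℤ} (hd : 1 ≤ d) (hl : ∀ x ∈ l, 2 ≤ x)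
    (h : HasTParams d l) : IsTChain l := by
  obtain ⟨n, a, ha, han, hgcd, hm⟩ := h
  exact ⟨hl, d, n, a, hd, ha, han, hgcd, hjcfZ_eq_of_chainMat_eq_tMat hl hm⟩

theorem exists_reflTransGen_chainMat_eq_tMat {d n a : ℤ} (hd : 1 ≤ d) (ha : 0 < a) (han : a < n)
    (hgcd : Int.gcd a n = 1) :
    ∃ c, Relation.ReflTransGen tStep (tStart d) c ∧ chainMat c = tMat d n a := by
  rcases lt_trichotomy (2 * a) n with hlt | heq | hgt
  · obtain ⟨c, hc, hm⟩ := exists_reflTransGen_chainMat_eq_tMat (n := n - a) hd ha (by omega)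
      (by rwa [Int.gcd_sub_self_right])
    refine ⟨addLeft c, hc.tail (Or.inl rfl), ?_⟩
    rw [chainMat_addLeft_of_eq_tMat ha (by omega) hm, sub_add_cancel]
  · obtain rfl : a = 1 := by
      rw [← heq, Int.gcd_mul_left_right] at hgcd
      omega
    obtain rfl : n = 2 := by omega
    exact ⟨tStart d, .refl, chainMat_tStart hd⟩
  · have hgcd' : Int.gcd (2 * a - n) a = 1 := by
      rw [Int.gcd_comm, show 2 * a - n = -n + a * 2 by ring, Int.gcd_add_mul_left_right,
        Int.gcd_neg, hgcd]
    obtain ⟨c, hc, hm⟩ :=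
      exists_reflTransGen_chainMat_eq_tMat (n := a) hd (by omega : 0 < 2 * a - n) (by omega) hgcd'
    refine ⟨addRight c, hc.tail (Or.inr rfl), ?_⟩
    rw [chainMat_addRight_of_eq_tMat (by omega) (by omega) hm, sub_sub_cancel]
termination_by n.toNat
decreasing_by all_goals omega

theorem reflTransGen_tStart_of_hjcfZ_eq {b : List ℤ} (hb : ∀ x ∈ b, 2 ≤ x) {d n a : ℤ}
    (hd : 1 ≤ d) (ha : 0 < a) (han : a < n) (hgcd : Int.gcd a n = 1)
    (hval : hjcfZ b = ((d * n ^ 2 : ℤ) : ℚ) / ((d * n * a - 1 : ℤ) : ℚ)) :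
    Relation.ReflTransGen tStep (tStart d) b := by
  obtain ⟨c, hc, hm⟩ := exists_reflTransGen_chainMat_eq_tMat hd ha han hgcd
  have hc2 := two_le_of_reflTransGen (two_le_tStart d) hc
  rwa [← eq_of_hjcfZ_eq hc2 hb ((hjcfZ_eq_of_chainMat_eq_tMat hc2 hm).trans hval.symm)]

lemma exists_tStart_eq_iff (s : List ℤ) :
    (s = [4] ∨ ∃ k : ℕ, s = 3 :: (List.replicate k 2 ++ [3])) ↔ ∃ d, 1 ≤ d ∧ tStart d = s := by
  constructor
  · rintro (rfl | ⟨k, rfl⟩)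
    · exact ⟨1, le_rfl, rfl⟩
    · refine ⟨k + 2, by omega, ?_⟩
      rw [tStart, if_neg (by omega), show ((k : ℤ) + 2 - 2).toNat = k by omega]
  · rintro ⟨d, -, rfl⟩
    unfold tStart
    split_ifs
    · exact .inl rfl
    · exact .inr ⟨_, rfl⟩

theorem stmt3 (b : List ℤ) (h2 : ∀ x ∈ b, 2 ≤ x) :
    (IsTChain b ↔
      ∃ start : List ℤ,
        (start = [4] ∨ ∃ k : ℕ, start = 3 :: (List.replicate k 2 ++ [3])) ∧
          Relation.ReflTransGen tStep start b) ∧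
    (∀ d n a : ℤ, 1 ≤ d → 0 < a → a < n → Int.gcd a n = 1 →
      hjcfZ b = ((d * n ^ 2 : ℤ) : ℚ) / ((d * n * a - 1 : ℤ) : ℚ) →
      Relation.ReflTransGen tStep
        (if d = 1 then [4] else 3 :: (List.replicate (d - 2).toNat 2 ++ [3])) b) := by
  refine ⟨⟨?_, ?_⟩, fun d n a hd ha han hgcd hval ↦
    reflTransGen_tStart_of_hjcfZ_eq h2 hd ha han hgcd hval⟩
  · rintro ⟨-, d, n, a, hd, ha, han, hgcd, hval⟩
    exact ⟨tStart d, (exists_tStart_eq_iff _).2 ⟨d, hd, rfl⟩,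
      reflTransGen_tStart_of_hjcfZ_eq h2 hd ha han hgcd hval⟩
  · rintro ⟨s, hs, hr⟩
    obtain ⟨d, hd, rfl⟩ := (exists_tStart_eq_iff s).1 hs
    exact ((hasTParams_tStart hd).of_reflTransGen hr).isTChain hd h2
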